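/- Every cubic graph G (every vertex has degree exactly 3) admits a partition (V₁, V₂) of V(G) such that the subgraphs induced by V₁ and by V₂ each have maximum degree at most 1. In particular, G contains an induced forest with at least |V(G)|/2 vertices in which every connected component is isomorphic to K₁ or K₂. -/

import Mathlib

open Finset

lemma aux_acyclic {α : Type*} (H : SimpleGraph α)
    (hm : ∀ ⦃v a b : α⦄, H.Adj v a → H.Adj v b → a = b) : H.IsAcyclic := by
  intro v p hp
  cases p with
  | nil => exact hp.ne_nil rfl
  | cons h q =>
    rename_i w
    cases q with
    | nil => exact H.loopless.irrefl v h
    | cons h' q' =>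
      rename_i x
      have hx : v = x := hm h.symm h'
      subst hx
      cases q' with
      | nil =>
        have := hp.three_le_length
        simp [SimpleGraph.Walk.length_cons] at this
      | cons h'' q'' =>
        have hnd := hp.support_nodup
        simp [SimpleGraph.Walk.support_cons] at hnd

section

variable {V : Type} [Fintype V] [DecidableEq V] (G : SimpleGraph V) [DecidableRel G.Adj]

/-- the cost of a bipartition -/
def auxCost (S : Finset V) : ℕ :=
  ∑ u : V, if u ∈ S then (G.neighborFinset u ∩ S).card else (G.neighborFinset u ∩ Sᶜ).card

lemma auxCost_compl (S : Finset V) : auxCost G Sᶜ = auxCost G S := by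
  unfold auxCost
  apply Finset.sum_congr rfl
  intro u _
  by_cases hu : u ∈ S <;> simp [hu]

lemma aux_key (hcubic : ∀ v, G.degree v = 3) (S : Finset V)
    (hmin : ∀ T : Finset V, auxCost G S ≤ auxCost G T)
    {v : V} (hv : v ∈ S) : (G.neighborFinset v ∩ S).card ≤ 1 := by
  by_contra hc
  push_neg at hc
  set N := G.neighborFinset v with hNdef
  have hN3 : N.card = 3 := hcubic v
  have hvN : v ∉ N := by simp [hNdef]
  have hNS : N \ S = N ∩ Sᶜ := by ext w; simp
  have hsplit : (N ∩ S).card + (N ∩ Sᶜ).card = 3 := by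
    rw [← hNS, ← hN3]; exact Finset.card_inter_add_card_sdiff N S
  set T := S.erase v with hTdef
  set a : ℤ := ((N ∩ S).card : ℤ) with hadef
  set b : ℤ := ((N ∩ Sᶜ).card : ℤ) with hbdef
  -- pointwise difference
  have hpoint : ∀ u : V,
      (if u ∈ T then ((G.neighborFinset u ∩ T).card : ℤ) else ((G.neighborFinset u ∩ Tᶜ).card : ℤ))
      = (if u ∈ S then ((G.neighborFinset u ∩ S).card : ℤ) else ((G.neighborFinset u ∩ Sᶜ).card : ℤ))
        + (if u = v then b - a else if u ∈ N then (if u ∈ S then -1 else 1) else 0) := by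
    intro u
    have hsymm : u ∈ N ↔ v ∈ G.neighborFinset u := by
      simp [hNdef, SimpleGraph.mem_neighborFinset, SimpleGraph.adj_comm]
    by_cases huv : u = v
    · subst huv
      have hvT : u ∉ T := Finset.notMem_erase u S
      have heq : G.neighborFinset u ∩ Tᶜ = G.neighborFinset u ∩ Sᶜ := by
        ext w
        have hne : w ∈ G.neighborFinset u → w ≠ u := fun hw => (G.ne_of_adj ((SimpleGraph.mem_neighborFinset _ _ _).1 hw)).symm
        simp only [Finset.mem_inter, Finset.mem_compl, hTdef, Finset.mem_erase]
        constructor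
        · rintro ⟨h1, h2⟩; exact ⟨h1, fun hS => h2 ⟨hne h1, hS⟩⟩
        · rintro ⟨h1, h2⟩; exact ⟨h1, fun h => h2 h.2⟩
      simp [hvT, hv, heq, hadef, hbdef, hNdef]
    · by_cases huS : u ∈ S
      · have huT : u ∈ T := Finset.mem_erase.mpr ⟨huv, huS⟩
        have hNT : G.neighborFinset u ∩ T = (G.neighborFinset u ∩ S).erase v := by
          ext w; simp only [Finset.mem_inter, hTdef, Finset.mem_erase]; tauto
        by_cases hadj : u ∈ N
        · have hvmem : v ∈ G.neighborFinset u ∩ S := Finset.mem_inter.mpr ⟨hsymm.1 hadj, hv⟩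
          simp only [huT, huS, huv, hadj, if_true, if_false, hNT,
            Finset.card_erase_of_mem hvmem]
          rw [Nat.cast_sub (Finset.one_le_card.mpr ⟨v, hvmem⟩)]
          push_cast; ring
        · have hvnot : v ∉ G.neighborFinset u ∩ S := fun h => hadj (hsymm.2 (Finset.mem_inter.mp h).1)
          simp [huT, huS, huv, hadj, hNT, Finset.erase_eq_of_notMem hvnot]
      · have huT : u ∉ T := fun h => huS (Finset.mem_of_mem_erase h)
        by_cases hadj : u ∈ N
        · have heq : G.neighborFinset u ∩ Tᶜ = insert v (G.neighborFinset u ∩ Sᶜ) := by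
            ext w
            simp only [Finset.mem_inter, Finset.mem_compl, hTdef, Finset.mem_erase,
              Finset.mem_insert]
            constructor
            · rintro ⟨h1, h2⟩
              by_cases hwv : w = v
              · exact Or.inl hwv
              · exact Or.inr ⟨h1, fun hS => h2 ⟨hwv, hS⟩⟩
            · rintro (rfl | ⟨h1, h2⟩)
              · exact ⟨hsymm.1 hadj, fun h => h.1 rfl⟩
              · exact ⟨h1, fun h => h2 h.2⟩
          have hvnotin : v ∉ G.neighborFinset u ∩ Sᶜ := by simp [hv]
          simp only [huT, huS, huv, hadj, if_true, if_false, heq,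
            Finset.card_insert_of_notMem hvnotin]
          push_cast; ring
        · have heq : G.neighborFinset u ∩ Tᶜ = G.neighborFinset u ∩ Sᶜ := by
            ext w
            simp only [Finset.mem_inter, Finset.mem_compl, hTdef, Finset.mem_erase]
            constructor
            · rintro ⟨h1, h2⟩
              refine ⟨h1, fun hS => h2 ⟨fun hwv => hadj (hsymm.2 (hwv ▸ h1)), hS⟩⟩
            · rintro ⟨h1, h2⟩; exact ⟨h1, fun h => h2 h.2⟩
          simp [huT, huS, huv, hadj, heq]
  -- sum it up
  have hsum : (auxCost G T : ℤ) = (auxCost G S : ℤ) + 2 * (b - a) := by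
    unfold auxCost
    push_cast
    rw [Finset.sum_congr rfl (fun u _ => hpoint u), Finset.sum_add_distrib]
    congr 1
    rw [← Finset.add_sum_erase _ _ (Finset.mem_univ v)]
    simp only [if_true]
    have h1 : ∑ u ∈ Finset.univ.erase v,
        (if u = v then b - a else if u ∈ N then (if u ∈ S then (-1:ℤ) else 1) else 0)
        = ∑ u ∈ Finset.univ.erase v, (if u ∈ N then (if u ∈ S then (-1:ℤ) else 1) else 0) := by
      apply Finset.sum_congr rfl
      intro u hu
      simp [Finset.ne_of_mem_erase hu]
    rw [h1]
    have h2 : ∑ u ∈ Finset.univ.erase v, (if u ∈ N then (if u ∈ S then (-1:ℤ) else 1) else 0)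
        = ∑ u : V, (if u ∈ N then (if u ∈ S then (-1:ℤ) else 1) else 0) := by
      rw [← Finset.add_sum_erase _ _ (Finset.mem_univ v)]
      simp [hvN]
    rw [h2, Finset.sum_ite_mem, Finset.univ_inter, Finset.sum_ite, Finset.sum_const,
      Finset.sum_const, Finset.filter_mem_eq_inter, ← Finset.sdiff_eq_filter, hNS]
    simp only [smul_eq_mul, mul_neg, mul_one, hadef, hbdef]
    ring
  have hba : b - a ≤ -1 := by
    have ha2 : (1:ℤ) < a := by simp only [hadef]; exact_mod_cast hc
    have : a + b = 3 := by simp only [hadef, hbdef]; exact_mod_cast hsplit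
    omega
  have hlt : (auxCost G T : ℤ) < (auxCost G S : ℤ) := by omega
  exact absurd (hmin T) (by exact_mod_cast not_le.mpr hlt)

lemma aux_induced (A : Finset V) (hA : ∀ v ∈ A, (G.neighborFinset v ∩ A).card ≤ 1) :
    (G.induce (A : Set V)).IsAcyclic ∧
    (∀ v : (A : Set V), ((G.induce (A : Set V)).neighborSet v).ncard ≤ 1) := by
  have hm : ∀ ⦃x a b : (A : Set V)⦄, (G.induce (A : Set V)).Adj x a →
      (G.induce (A : Set V)).Adj x b → a = b := by
    intro x p q hp hq
    have hp' : G.Adj ↑x ↑p := hp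
    have hq' : G.Adj ↑x ↑q := hq
    have h1 : (↑p : V) ∈ G.neighborFinset ↑x ∩ A := by
      simp [SimpleGraph.mem_neighborFinset, hp', p.2]
    have h2 : (↑q : V) ∈ G.neighborFinset ↑x ∩ A := by
      simp [SimpleGraph.mem_neighborFinset, hq', q.2]
    exact Subtype.ext (Finset.card_le_one.mp (hA ↑x x.2) _ h1 _ h2)
  refine ⟨aux_acyclic _ hm, fun v => ?_⟩
  rw [Set.ncard_le_one_iff]
  intro a b ha hb
  exact hm ha hb

end

/-- Every cubic graph admits a partition (V₁, V₂) of its vertex set such that both parts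
induce subgraphs of maximum degree at most 1; in particular it contains an induced forest
with at least |V(G)|/2 vertices whose components are all isomorphic to K₁ or K₂
(equivalently, an induced subgraph that is acyclic with maximum degree at most 1). -/
theorem stmt16 {V : Type} [Fintype V] [DecidableEq V] (G : SimpleGraph V)
    [DecidableRel G.Adj] (hcubic : ∀ v, G.degree v = 3) :
    (∃ V₁ V₂ : Finset V, V₁ ∪ V₂ = Finset.univ ∧ Disjoint V₁ V₂ ∧
      (∀ v : (V₁ : Set V), ((G.induce (V₁ : Set V)).neighborSet v).ncard ≤ 1) ∧
      (∀ v : (V₂ : Set V), ((G.induce (V₂ : Set V)).neighborSet v).ncard ≤ 1)) ∧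
    (∃ S : Finset V, (G.induce (S : Set V)).IsAcyclic ∧
      (∀ v : (S : Set V), ((G.induce (S : Set V)).neighborSet v).ncard ≤ 1) ∧
      (Fintype.card V : ℝ) / 2 ≤ (S.card : ℝ)) := by
  obtain ⟨S, -, hmin⟩ := Finset.exists_min_image (Finset.univ : Finset (Finset V))
    (auxCost G) ⟨∅, Finset.mem_univ _⟩
  have hmin' : ∀ T : Finset V, auxCost G S ≤ auxCost G T := fun T => hmin T (Finset.mem_univ T)
  have hminc : ∀ T : Finset V, auxCost G Sᶜ ≤ auxCost G T := fun T => by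
    rw [auxCost_compl]; exact hmin' T
  have hA : ∀ v ∈ S, (G.neighborFinset v ∩ S).card ≤ 1 :=
    fun v hv => aux_key G hcubic S hmin' hv
  have hB : ∀ v ∈ Sᶜ, (G.neighborFinset v ∩ Sᶜ).card ≤ 1 :=
    fun v hv => aux_key G hcubic Sᶜ hminc hv
  obtain ⟨hac1, hn1⟩ := aux_induced G S hA
  obtain ⟨hac2, hn2⟩ := aux_induced G Sᶜ hB
  refine ⟨⟨S, Sᶜ, Finset.union_compl S, disjoint_compl_right, hn1, hn2⟩, ?_⟩
  have hcards : S.card + Sᶜ.card = Fintype.card V := by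
    have := Finset.card_le_univ S
    rw [Finset.card_compl]
    omega
  by_cases hbig : Fintype.card V ≤ 2 * S.card
  · refine ⟨S, hac1, hn1, ?_⟩
    rw [div_le_iff₀ (by norm_num)]
    have h2 : Fintype.card V ≤ #S * 2 := by omega
    exact_mod_cast h2
  · refine ⟨Sᶜ, hac2, hn2, ?_⟩
    rw [div_le_iff₀ (by norm_num)]
    have h2 : Fintype.card V ≤ #Sᶜ * 2 := by omega
    exact_mod_cast h2
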